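/- arXiv:0704.0197 — 2 statements merged into one kernel-verified Lean document; each statement's English description precedes it below -/
import Mathlib

section
/- Let K ≥ 1, let p ∈ [0,1], and let F_{K,p} be the distribution on Boolean functions f : 𝔽₂^K → 𝔽₂ in which the 2^K entries of the truth table of f are independent Bernoulli(p) random variables (each entry is 1 with probability p). Then for every a ∈ [0,1], Lynch's parameter λ = Σ_f P(F_{K,p} = f) Σ_{w ∈ 𝔽₂^K} s_f(w) · a^(wH(w)) · (1−a)^(K − wH(w)) satisfies λ = 2·K·p·(1−p). -/
open Finset

/-- Boolean vectors of length `K`, modelling `𝔽₂^K`. -/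
abbrev BVec (K : ℕ) := Fin K → Bool

/-- Flip the `i`-th coordinate of `w`, i.e. `w ⊕ eᵢ`. -/
def flipCoord {K : ℕ} (w : BVec K) (i : Fin K) : BVec K :=
  Function.update w i (!(w i))

/-- The sensitivity `s_f(w)`: the number of coordinates `i` with `f(w) ≠ f(w ⊕ eᵢ)`. -/
def sens {K : ℕ} (f : BVec K → Bool) (w : BVec K) : ℕ :=
  (univ.filter (fun i : Fin K => f w ≠ f (flipCoord w i))).card

/-- The average sensitivity `s(f) = 2⁻ᴷ Σ_w s_f(w)`. -/
noncomputable def avgSens {K : ℕ} (f : BVec K → Bool) : ℝ :=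
  (2 ^ K : ℝ)⁻¹ * ∑ w : BVec K, (sens f w : ℝ)

/-- The Hamming weight of the truth table of `f`. -/
def wt {K : ℕ} (f : BVec K → Bool) : ℕ :=
  (univ.filter (fun w : BVec K => f w = true)).card

/-- Hamming weight of a Boolean vector. -/
def hw {K : ℕ} (w : BVec K) : ℕ :=
  (univ.filter (fun i : Fin K => w i = true)).card

/-- Interpret a Boolean value as a real number. -/
def b2r (b : Bool) : ℝ := if b then 1 else 0

/-- Bernoulli(`p`) product weight of a Boolean function: each of the `2^K` truth-table
entries is independently `1` with probability `p`. -/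
noncomputable def bernP {K : ℕ} (p : ℝ) (f : BVec K → Bool) : ℝ :=
  p ^ wt f * (1 - p) ^ (2 ^ K - wt f)

/-- `s^(l)(f,w)`: number of `x` with Hamming weight `l` such that `f(w) ≠ f(w ⊕ x)`. -/
def sensOrd {K : ℕ} (f : BVec K → Bool) (l : ℕ) (w : BVec K) : ℕ :=
  (univ.filter (fun x : BVec K => hw x = l ∧ f w ≠ f (fun i => xor (w i) (x i)))).card

/-- Average sensitivity of order `l`. -/
noncomputable def avgSensOrd {K : ℕ} (f : BVec K → Bool) (l : ℕ) : ℝ :=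
  (2 ^ K : ℝ)⁻¹ * ∑ w : BVec K, (sensOrd f l w : ℝ)

/-!
Under the product weight `bernP p`, distinct truth-table entries are independent Bernoulli(`p`)
variables, so `f w ≠ f (w ⊕ eᵢ)` has probability `2p(1 - p)` for every `w` and `i`. Hence the
expected sensitivity at every `w` is `2Kp(1 - p)`, and the weights `a^wH(w) (1 - a)^(K - wH(w))`,
being a product weight themselves, sum to `1`.
-/

section ProductWeight

variable {α : Type*} [Fintype α]

theorem prod_ite_bool_eq_pow_mul_pow (g : α → Bool) (x y : ℝ) :
    ∏ v, (if g v then x else y)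
      = x ^ #{v | g v = true} * y ^ (Fintype.card α - #{v | g v = true}) := by
  rw [prod_ite, prod_const, prod_const, ← card_univ,
    ← card_filter_add_card_filter_not (s := univ) (p := fun v => g v = true)]
  simp

theorem sum_prod_ite_bool_mul_prod_b2r [DecidableEq α] (p : ℝ) (S : Finset α) :
    ∑ g : α → Bool, (∏ v, if g v then p else 1 - p) * ∏ v ∈ S, b2r (g v) = p ^ #S := by
  have factor (v : α) :
      ∑ b : Bool, (if b then p else 1 - p) * (if v ∈ S then b2r b else 1)
        = if v ∈ S then p else 1 := by
    by_cases hv : v ∈ S <;> simp [hv, b2r]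
  calc ∑ g : α → Bool, (∏ v, if g v then p else 1 - p) * ∏ v ∈ S, b2r (g v)
      = ∑ g : α → Bool, ∏ v, (if g v then p else 1 - p) * (if v ∈ S then b2r (g v) else 1) := by
        simp only [prod_mul_distrib, prod_ite_mem, univ_inter]
    _ = ∏ v, if v ∈ S then p else 1 := by
        rw [← prod_congr rfl fun v _ => factor v]
        exact (Fintype.prod_sum fun v b => (if b then p else 1 - p) *
          (if v ∈ S then b2r b else 1)).symm
    _ = p ^ #S := by simp

end ProductWeight

section BooleanFunctions

variable {K : ℕ}

theorem bernP_eq_prod (p : ℝ) (f : BVec K → Bool) :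
    bernP p f = ∏ v, if f v then p else 1 - p := by
  rw [prod_ite_bool_eq_pow_mul_pow, Fintype.card_fun, Fintype.card_bool, Fintype.card_fin]
  rfl

theorem pow_hw_mul_pow_eq_prod (a : ℝ) (w : BVec K) :
    a ^ hw w * (1 - a) ^ (K - hw w) = ∏ i, if w i then a else 1 - a := by
  rw [prod_ite_bool_eq_pow_mul_pow, Fintype.card_fin]
  rfl

theorem sum_pow_hw_mul_pow (a : ℝ) :
    ∑ w : BVec K, a ^ hw w * (1 - a) ^ (K - hw w) = 1 := by
  simpa [pow_hw_mul_pow_eq_prod] using sum_prod_ite_bool_mul_prod_b2r a (∅ : Finset (Fin K))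

theorem sum_bernP_mul_prod_b2r (p : ℝ) (S : Finset (BVec K)) :
    ∑ f : BVec K → Bool, bernP p f * ∏ v ∈ S, b2r (f v) = p ^ #S := by
  simp only [bernP_eq_prod, sum_prod_ite_bool_mul_prod_b2r]

theorem sum_bernP_mul_ite_ne (p : ℝ) {w w' : BVec K} (h : w ≠ w') :
    ∑ f : BVec K → Bool, bernP p f * (if f w ≠ f w' then 1 else 0) = 2 * p * (1 - p) := by
  have ite_ne_eq (b b' : Bool) :
      (if b ≠ b' then (1 : ℝ) else 0) = b2r b + b2r b' - 2 * (b2r b * b2r b') := by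
    cases b <;> cases b' <;> norm_num [b2r]
  have hS := sum_bernP_mul_prod_b2r p {w, w'}
  have hw := sum_bernP_mul_prod_b2r p {w}
  have hw' := sum_bernP_mul_prod_b2r p {w'}
  simp only [prod_pair h, card_pair h] at hS
  simp only [prod_singleton, card_singleton, pow_one] at hw hw'
  simp only [ite_ne_eq, mul_sub, mul_add, sum_sub_distrib, sum_add_distrib,
    mul_left_comm _ (2 : ℝ), ← mul_sum, hS, hw, hw']
  ring

theorem ne_flipCoord (w : BVec K) (i : Fin K) : w ≠ flipCoord w i := by
  intro h
  simpa [flipCoord] using congrFun h i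

theorem sens_eq_sum (f : BVec K → Bool) (w : BVec K) :
    (sens f w : ℝ) = ∑ i, if f w ≠ f (flipCoord w i) then 1 else 0 :=
  natCast_card_filter _ _

theorem sum_bernP_mul_sens (p : ℝ) (w : BVec K) :
    ∑ f : BVec K → Bool, bernP p f * sens f w = 2 * K * p * (1 - p) := by
  simp only [sens_eq_sum, mul_sum]
  rw [sum_comm, sum_congr rfl fun i _ => sum_bernP_mul_ite_ne p (ne_flipCoord w i)]
  simp only [sum_const, card_univ, Fintype.card_fin, nsmul_eq_mul]
  ring

end BooleanFunctions

theorem lynch_lambda_bernoulli_general (K : ℕ) (p : ℝ) (a : ℝ) :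
    ∑ f : BVec K → Bool, bernP p f *
        ∑ w : BVec K, (sens f w : ℝ) * a ^ hw w * (1 - a) ^ (K - hw w)
      = 2 * K * p * (1 - p) := by
  calc _ = ∑ w : BVec K, (∑ f : BVec K → Bool, bernP p f * sens f w) *
          (a ^ hw w * (1 - a) ^ (K - hw w)) := by
        simp only [mul_sum, sum_mul, mul_assoc]
        exact sum_comm
    _ = 2 * K * p * (1 - p) := by
        simp only [sum_bernP_mul_sens, ← mul_sum, sum_pow_hw_mul_pow, mul_one]

theorem lynch_lambda_bernoulli (K : ℕ) (hK : 1 ≤ K) (p : ℝ)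
    (hp0 : 0 ≤ p) (hp1 : p ≤ 1) (a : ℝ) (ha0 : 0 ≤ a) (ha1 : a ≤ 1) :
    ∑ f : BVec K → Bool, bernP p f *
        ∑ w : BVec K, (sens f w : ℝ) * a ^ hw w * (1 - a) ^ (K - hw w)
      = 2 * K * p * (1 - p) :=
  lynch_lambda_bernoulli_general K p a
end

section
/- Let K ≥ 1, let p ∈ [0,1] be such that p·2^K is an integer, and let F^fixed_{K,p} be the uniform distribution on the set of Boolean functions f : 𝔽₂^K → 𝔽₂ whose truth table has Hamming weight exactly p·2^K. Then for every a ∈ [0,1], Lynch's parameter λ = Σ_f P(F^fixed_{K,p} = f) Σ_{w ∈ 𝔽₂^K} s_f(w) · a^(wH(w)) · (1−a)^(K − wH(w)) satisfies λ = 2^(K+1)·K·p·(1−p) / (2^K − 1). -/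
open Finset

/-!
Write `N` for the set of truth tables of weight `t` and `n = 2^K`. Exchanging the sums,
`λ · |N| = Σ_w a^{wH(w)} (1-a)^{K-wH(w)} Σ_{f ∈ N} s_f(w)`. The symmetric group of `𝔽₂^K` preserves
`N` and acts 2-transitively, so the number of `f ∈ N` with `f(u) = 1`, `f(v) = 0` is the same for
all pairs `u ≠ v`; double counting such triples `(f, u, v)` shows that
`#{f ∈ N | f(u) ≠ f(v)} = 2 |N| t (n - t) / (n (n - 1))`. Taking `v = w ⊕ eᵢ` and summing over `i`
gives `Σ_{f ∈ N} s_f(w)` independently of `w`, and the binomial weights sum to `1`.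
-/

theorem sum_pow_hw_mul_pow_sub_hw {R : Type*} [CommSemiring R] (K : ℕ) (a b : R) :
    ∑ w : BVec K, a ^ hw w * b ^ (K - hw w) = (a + b) ^ K := by
  have hprod (w : BVec K) : a ^ hw w * b ^ (K - hw w) = ∏ i, cond (w i) a b := by
    have h := card_filter_add_card_filter_not (s := univ) (fun i => w i = true)
    rw [card_univ, Fintype.card_fin] at h
    simp only [cond_eq_ite]
    rw [prod_ite, prod_const, prod_const, hw]
    congr 2
    omega
  simp_rw [hprod, ← Fintype.prod_sum (fun _ b' => cond b' a b)]
  simp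

theorem flipCoord_ne {K : ℕ} (w : BVec K) (i : Fin K) : flipCoord w i ≠ w := fun h => by
  simpa [flipCoord] using congrFun h i

/-- The support of `F^fixed_{K,p}` when `α = 𝔽₂^K` and `t = p·2^K`. -/
def fixedWeight (α : Type*) [Fintype α] [DecidableEq α] (t : ℕ) : Finset (α → Bool) :=
  {f | #{x | f x = true} = t}

section FixedWeight

variable {α : Type*} [Fintype α] [DecidableEq α]

theorem comp_perm_mem_fixedWeight {t : ℕ} (f : α → Bool) (σ : Equiv.Perm α) :
    f ∘ σ ∈ fixedWeight α t ↔ f ∈ fixedWeight α t := by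
  simp only [fixedWeight, mem_filter, mem_univ, true_and, Function.comp_apply]
  rw [← card_map σ.toEmbedding, map_filter]
  simp

theorem fixedWeight_nonempty {t : ℕ} (ht : t ≤ Fintype.card α) : (fixedWeight α t).Nonempty := by
  obtain ⟨S, -, hS⟩ := exists_subset_card_eq (s := (univ : Finset α)) (by simpa using ht)
  exact ⟨fun x => decide (x ∈ S), by simp [fixedWeight, hS]⟩

theorem card_filter_eq_false_of_mem_fixedWeight {t : ℕ} {f : α → Bool}
    (hf : f ∈ fixedWeight α t) : #{x | f x = false} = Fintype.card α - t := by
  simp only [fixedWeight, mem_filter, mem_univ, true_and] at hf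
  rw [← hf, ← card_univ, ← card_filter_add_card_filter_not (s := univ) (fun x => f x = true)]
  simp

theorem card_filter_true_false_eq {t : ℕ} {u v u' v' : α} (huv : u ≠ v) (huv' : u' ≠ v') :
    #{f ∈ fixedWeight α t | f u = true ∧ f v = false}
      = #{f ∈ fixedWeight α t | f u' = true ∧ f v' = false} := by
  obtain ⟨σ, rfl, rfl⟩ := MulAction.is_two_pretransitive_iff.mp
    (Equiv.Perm.isMultiplyPretransitive α 2) huv huv'
  refine card_nbij' (· ∘ σ.symm) (· ∘ σ) ?_ ?_ ?_ ?_ <;> intro f hf <;>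
    simp_all [comp_perm_mem_fixedWeight, Equiv.Perm.smul_def, Function.comp_assoc]

theorem sum_offDiag_card_filter_true_false (t : ℕ) :
    ∑ q ∈ (univ : Finset α).offDiag, #{f ∈ fixedWeight α t | f q.1 = true ∧ f q.2 = false}
      = #(fixedWeight α t) * (t * (Fintype.card α - t)) := by
  simp_rw [card_filter]
  rw [sum_comm, ← smul_eq_mul, ← sum_const]
  refine sum_congr rfl fun f hf => ?_
  have hpairs : {q ∈ (univ : Finset α).offDiag | f q.1 = true ∧ f q.2 = false}
      = ({x | f x = true} : Finset α) ×ˢ ({x | f x = false} : Finset α) := by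
    ext ⟨x, y⟩
    simp only [mem_filter, mem_offDiag, mem_product, mem_univ, true_and]
    constructor
    · exact fun h => h.2
    · rintro ⟨hx, hy⟩
      exact ⟨fun hxy => by simp_all, hx, hy⟩
  rw [← card_filter, hpairs, card_product, card_filter_eq_false_of_mem_fixedWeight hf,
    (mem_filter.1 hf).2]

theorem card_filter_ne_eq_add {t : ℕ} (u v : α) :
    #{f ∈ fixedWeight α t | f u ≠ f v}
      = #{f ∈ fixedWeight α t | f u = true ∧ f v = false}
        + #{f ∈ fixedWeight α t | f v = true ∧ f u = false} := by
  rw [← card_union_of_disjoint (disjoint_filter.2 fun f _ h h' => by simp_all), ← filter_or]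
  congr 1
  refine filter_congr fun f _ => ?_
  cases f u <;> cases f v <;> simp

theorem card_mul_card_filter_ne {t : ℕ} {u v : α} (huv : u ≠ v) :
    Fintype.card α * (Fintype.card α - 1) * #{f ∈ fixedWeight α t | f u ≠ f v}
      = 2 * (#(fixedWeight α t) * (t * (Fintype.card α - t))) := by
  have hsum := sum_offDiag_card_filter_true_false (α := α) t
  rw [sum_congr rfl fun q hq => card_filter_true_false_eq (mem_offDiag.1 hq).2.2 huv, sum_const,
    offDiag_card, card_univ, smul_eq_mul, ← Nat.mul_sub_one] at hsum
  rw [card_filter_ne_eq_add, card_filter_true_false_eq huv.symm huv, ← hsum]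
  ring

theorem card_filter_ne_fixedWeight {t : ℕ} {u v : α} (huv : u ≠ v) (ht : t ≤ Fintype.card α) :
    (#{f ∈ fixedWeight α t | f u ≠ f v} : ℝ)
      = 2 * #(fixedWeight α t) * t * (Fintype.card α - t)
          / (Fintype.card α * (Fintype.card α - 1)) := by
  have hα : 1 < Fintype.card α := Fintype.one_lt_card_iff.2 ⟨u, v, huv⟩
  have hαℝ : (1 : ℝ) < Fintype.card α := by exact_mod_cast hα
  have h := congrArg (Nat.cast : ℕ → ℝ) (card_mul_card_filter_ne (t := t) huv)
  push_cast [Nat.cast_sub ht, Nat.cast_sub hα.le] at h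
  rw [eq_div_iff (by nlinarith)]
  linarith

end FixedWeight

theorem sum_sens_fixedWeight {K t : ℕ} (ht : t ≤ 2 ^ K) (w : BVec K) :
    ∑ f ∈ fixedWeight (BVec K) t, (sens f w : ℝ)
      = K * (2 * #(fixedWeight (BVec K) t) * t * (2 ^ K - t) / (2 ^ K * (2 ^ K - 1))) := by
  have hcard : Fintype.card (BVec K) = 2 ^ K := by simp
  calc ∑ f ∈ fixedWeight (BVec K) t, (sens f w : ℝ)
      = ∑ i : Fin K, (#{f ∈ fixedWeight (BVec K) t | f w ≠ f (flipCoord w i)} : ℝ) := by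
        simp only [sens, card_filter]
        push_cast
        exact sum_comm
    _ = _ := by
        simp only [card_filter_ne_fixedWeight (flipCoord_ne w _).symm (hcard ▸ ht), hcard,
          sum_const, card_univ, Fintype.card_fin, nsmul_eq_mul]
        push_cast
        ring

theorem lynch_lambda_fixedBias_general (K : ℕ) (p : ℝ)
    (hp1 : p ≤ 1) (t : ℕ) (ht : (t : ℝ) = p * 2 ^ K)
    (a : ℝ) :
    (∑ f ∈ univ.filter (fun f : BVec K → Bool => wt f = t),
        ∑ w : BVec K, (sens f w : ℝ) * a ^ hw w * (1 - a) ^ (K - hw w))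
      / ((univ.filter (fun f : BVec K → Bool => wt f = t)).card : ℝ)
      = 2 ^ (K + 1) * K * p * (1 - p) / ((2 : ℝ) ^ K - 1) := by
  have htK : t ≤ 2 ^ K := by
    have : (t : ℝ) ≤ 2 ^ K := by rw [ht]; exact mul_le_of_le_one_left (by positivity) hp1
    exact_mod_cast this
  have hN : (#(fixedWeight (BVec K) t) : ℝ) ≠ 0 := by
    exact_mod_cast (fixedWeight_nonempty (by simpa using htK)).card_pos.ne'
  have hweights : ∑ w : BVec K, a ^ hw w * (1 - a) ^ (K - hw w) = 1 := by
    simp [sum_pow_hw_mul_pow_sub_hw]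
  change (∑ f ∈ fixedWeight (BVec K) t, _) / (#(fixedWeight (BVec K) t) : ℝ) = _
  rw [sum_comm]
  simp_rw [mul_assoc, ← sum_mul, sum_sens_fixedWeight htK, ← mul_sum, hweights, ht]
  field_simp
  ring

theorem lynch_lambda_fixedBias (K : ℕ) (hK : 1 ≤ K) (p : ℝ)
    (hp0 : 0 ≤ p) (hp1 : p ≤ 1) (t : ℕ) (ht : (t : ℝ) = p * 2 ^ K)
    (a : ℝ) (ha0 : 0 ≤ a) (ha1 : a ≤ 1) :
    (∑ f ∈ univ.filter (fun f : BVec K → Bool => wt f = t),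
        ∑ w : BVec K, (sens f w : ℝ) * a ^ hw w * (1 - a) ^ (K - hw w))
      / ((univ.filter (fun f : BVec K → Bool => wt f = t)).card : ℝ)
      = 2 ^ (K + 1) * K * p * (1 - p) / ((2 : ℝ) ^ K - 1) :=
  lynch_lambda_fixedBias_general K p hp1 t ht a
end
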